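/- Let T be an ORB-tree with n leaves, S its covariance matrix, Φ its Haar-like matrix, and ζ the fraction of vanishing entries of Φ'SΦ. Then ζ ≥ 1 + 1/|L| − 2·avg(T̊)/|T̊| = 1 − 1/|L| − 2·TPL(T̊)/|T̊|², where T̊ is the interior of T (the tree obtained by removing the leaves of T), which has |T̊| = n vertices. -/

import Mathlib

open Finset

noncomputable section
open scoped Classical

/-- A finite rooted tree on vertices `Fin n`, given by a parent function:
every vertex reaches the root by iterating `parent`, and the root is its own parent. -/
structure RTree where
  n : ℕ
  npos : 0 < n
  root : Fin n
  parent : Fin n → Fin n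
  parent_root : parent root = root
  reach : ∀ v, ∃ k, parent^[k] v = root

namespace RTree

variable (T : RTree)

/-- `u` is an ancestor of `v` (every vertex is an ancestor of itself). -/
def Anc (u v : Fin T.n) : Prop := ∃ k, T.parent^[k] v = u

/-- The children of a vertex. -/
def children (v : Fin T.n) : Finset (Fin T.n) :=
  Finset.univ.filter fun u => T.parent u = v ∧ u ≠ T.root

def IsLeaf (v : Fin T.n) : Prop := T.children v = ∅

/-- The leaf set of the tree. -/
def leaves : Finset (Fin T.n) := Finset.univ.filter fun v => T.IsLeaf v

/-- The internal (non-leaf) vertices; the root is internal. -/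
def internal : Finset (Fin T.n) := Finset.univ.filter fun v => ¬ T.IsLeaf v

/-- `L(v)`: the leaves descending from `v`. -/
def Ldesc (v : Fin T.n) : Finset (Fin T.n) := T.leaves.filter fun i => T.Anc v i

/-- Depth of a vertex: number of edges to the root. -/
def depth (v : Fin T.n) : ℕ := Nat.find (T.reach v)

/-- Number of vertices of the subtree rooted at `v`. -/
def subtreeSize (v : Fin T.n) : ℕ := (Finset.univ.filter fun u => T.Anc v u).card

/-- ORB-tree: the root has exactly one child and is not a leaf, and every other
internal vertex has exactly two children (so every vertex has degree 1 or 3). -/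
def IsORB : Prop :=
  ¬ T.IsLeaf T.root ∧ (T.children T.root).card = 1 ∧
  ∀ v, ¬ T.IsLeaf v → v ≠ T.root → (T.children v).card = 2

/-- The type of leaves. -/
abbrev Leaf := {i // i ∈ T.leaves}

/-- `δ_e` for the edge `e` above vertex `v`: the indicator vector of the leaves
descending from that edge. -/
def delta (v : Fin T.n) : T.Leaf → ℝ := fun i => if T.Anc v i.1 then 1 else 0

/-- The covariance matrix of the tree with branch lengths `ℓ`
(`ℓ v` is the length of the edge joining `v` to its parent):
`S = ∑_{e ∈ E} ℓ(e) δ_e δ_e'`.  Equivalently `S(i,j) = ∑_{e ∈ [i∧j,∘]} ℓ(e)`. -/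
def cov (ℓ : Fin T.n → ℝ) : Matrix T.Leaf T.Leaf ℝ :=
  ∑ v ∈ Finset.univ.filter (fun v => v ≠ T.root),
    ℓ v • Matrix.vecMulVec (T.delta v) (T.delta v)

/-- The trace branch length `ℓ*(i,v) = ∑_{e ∈ [i,v]} |L(e)| ℓ(e)`; the edge above `w`
lies on the path between `i` and `v` iff exactly one of `i`, `v` descends from `w`. -/
def lstar (ℓ : Fin T.n → ℝ) (i v : Fin T.n) : ℝ :=
  ∑ w ∈ Finset.univ.filter (fun w => w ≠ T.root ∧
      ((T.Anc w i ∧ ¬ T.Anc w v) ∨ (T.Anc w v ∧ ¬ T.Anc w i))),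
    ((T.Ldesc w).card : ℝ) * ℓ w

/-- `φ` is the family of Haar-like wavelets of `T`, indexed by internal vertices. -/
def IsHaarLike (φ : Fin T.n → T.Leaf → ℝ) : Prop :=
  (∀ i, φ T.root i = 1 / Real.sqrt ((T.leaves.card : ℝ))) ∧
  ∀ v ∈ T.internal, v ≠ T.root → ∃ c₀ c₁, c₀ ≠ c₁ ∧ T.children v = {c₀, c₁} ∧
    ∀ i : T.Leaf, φ v i =
      if i.1 ∈ T.Ldesc c₀ then
        Real.sqrt (((T.Ldesc c₁).card : ℝ) / (((T.Ldesc c₀).card : ℝ) * ((T.Ldesc v).card : ℝ)))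
      else if i.1 ∈ T.Ldesc c₁ then
        - Real.sqrt (((T.Ldesc c₀).card : ℝ) / (((T.Ldesc c₁).card : ℝ) * ((T.Ldesc v).card : ℝ)))
      else 0

/-- `T` is trace-balanced (at every non-root internal vertex). -/
def TraceBalanced (ℓ : Fin T.n → ℝ) : Prop :=
  ∀ v ∈ T.internal, v ≠ T.root → ∀ i ∈ T.Ldesc v, ∀ j ∈ T.Ldesc v,
    T.lstar ℓ i v = T.lstar ℓ j v

end RTree

/-!
Write `S = ∑_e ℓ(e) δ_e δ_e'`, so that `(Φ'SΦ)(u,v) = ∑_e ℓ(e) ⟨φ_u, δ_e⟩ ⟨φ_v, δ_e⟩`.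
For `u` below the root, `⟨φ_u, δ_e⟩ = 0` unless `e` lies strictly below `u`: above `u` the
indicator `δ_e` is constant on the support of `φ_u`, which has mean zero, and elsewhere the
supports are disjoint. Hence `(Φ'SΦ)(u,v) = 0` whenever `u` and `v` are incomparable, and the
comparable pairs of internal nodes number `2 ∑_u |T̊(u)| - n = 2 n avg(T̊) - n`. Counting each
vertex `w` of `T̊` once for each of its `depth w + 1` ancestors gives `∑_u |T̊(u)| = TPL(T̊) + n`,
and an ORB-tree has as many leaves as internal nodes.
-/

lemma mul_sqrt_div_mul_comm {x y : ℝ} (z : ℝ) (hx : 0 ≤ x) (hy : 0 ≤ y) :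
    x * √(y / (x * z)) = y * √(x / (y * z)) := by
  have key : ∀ {a : ℝ} (b : ℝ), 0 ≤ a → a * √(b / (a * z)) = √(a * b / z) := by
    intro a b ha
    rcases ha.eq_or_lt with rfl | ha
    · simp
    rcases eq_or_ne z 0 with rfl | hz
    · simp
    rw [← Real.sqrt_sq ha.le, ← Real.sqrt_mul (sq_nonneg a), Real.sqrt_sq ha.le]
    congr 1
    field_simp
  rw [key y hx, key x hy, mul_comm x y]

theorem Finset.card_sq_add_card_le {α : Type*} (s : Finset α) (r : α → α → Prop)
    [DecidableRel r] (hr : ∀ a ∈ s, r a a) (p : α × α → Prop) [DecidablePred p]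
    (hp : ∀ a ∈ s, ∀ b ∈ s, ¬ r a b → ¬ r b a → p (a, b)) :
    #s ^ 2 + #s ≤ #{x ∈ s ×ˢ s | p x} + 2 * ∑ a ∈ s, #{b ∈ s | r a b} := by
  set C₁ := {x ∈ s ×ˢ s | r x.1 x.2}
  set C₂ := {x ∈ s ×ˢ s | r x.2 x.1}
  have hC₁ : #C₁ = ∑ a ∈ s, #{b ∈ s | r a b} := by
    simp only [C₁, card_filter, sum_product]
  have hC₂ : #C₂ = ∑ a ∈ s, #{b ∈ s | r a b} := by
    simp only [C₂, card_filter, sum_product]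
    exact sum_comm
  have hdiag : #s ≤ #(C₁ ∩ C₂) := by
    refine card_le_card_of_injOn (fun a => (a, a)) (fun a ha => ?_)
      fun _ _ _ _ h => congrArg Prod.fst h
    rw [mem_coe] at ha
    simp [C₁, C₂, ha, hr a ha]
  have hcompl : #(s ×ˢ s) ≤ #{x ∈ s ×ˢ s | p x} + #(C₁ ∪ C₂) := by
    refine (card_le_card fun x hx => ?_).trans (card_union_le _ _)
    obtain ⟨ha, hb⟩ := mem_product.mp hx
    by_cases h₁ : r x.1 x.2
    · simp [C₁, hx, h₁]
    by_cases h₂ : r x.2 x.1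
    · simp [C₂, hx, h₂]
    simp [hx, hp _ ha _ hb h₁ h₂]
  have := card_union_add_card_inter C₁ C₂
  rw [card_product] at hcompl
  rw [sq]
  omega

namespace RTree

variable (T : RTree)

lemma iterate_parent_root (k : ℕ) : T.parent^[k] T.root = T.root :=
  Function.iterate_fixed T.parent_root k

lemma anc_refl (v : Fin T.n) : T.Anc v v := ⟨0, rfl⟩

lemma anc_root (v : Fin T.n) : T.Anc T.root v := T.reach v

variable {T}

lemma anc_trans {u v w : Fin T.n} (huv : T.Anc u v) (hvw : T.Anc v w) : T.Anc u w := by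
  obtain ⟨k, rfl⟩ := huv
  obtain ⟨j, rfl⟩ := hvw
  exact ⟨k + j, Function.iterate_add_apply _ _ _ _⟩

lemma anc_total {u v i : Fin T.n} (hu : T.Anc u i) (hv : T.Anc v i) :
    T.Anc u v ∨ T.Anc v u := by
  obtain ⟨k, rfl⟩ := hu
  obtain ⟨j, rfl⟩ := hv
  rcases le_total k j with h | h
  · exact .inr ⟨j - k, by rw [← Function.iterate_add_apply, Nat.sub_add_cancel h]⟩
  · exact .inl ⟨k - j, by rw [← Function.iterate_add_apply, Nat.sub_add_cancel h]⟩

lemma eq_root_of_iterate_eq_self {u : Fin T.n} {k : ℕ} (hk : 0 < k)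
    (h : T.parent^[k] u = u) : u = T.root := by
  obtain ⟨m, hm⟩ := T.reach u
  calc u = T.parent^[k * m] u := (Function.IsPeriodicPt.mul_const h m).symm
    _ = T.parent^[k * m - m] (T.parent^[m] u) := by
      rw [← Function.iterate_add_apply, Nat.sub_add_cancel (Nat.le_mul_of_pos_left m hk)]
    _ = T.root := by rw [hm, iterate_parent_root]

lemma anc_iff_exists_le_depth {u v : Fin T.n} :
    T.Anc u v ↔ ∃ k ≤ T.depth v, T.parent^[k] v = u := by
  refine ⟨fun ⟨k, hk⟩ => ?_, fun ⟨k, _, hk⟩ => ⟨k, hk⟩⟩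
  have hdepth : T.parent^[T.depth v] v = T.root := Nat.find_spec (T.reach v)
  rcases le_or_gt k (T.depth v) with h | h
  · exact ⟨k, h, hk⟩
  · refine ⟨T.depth v, le_rfl, ?_⟩
    rw [← hk, ← Nat.sub_add_cancel h.le, Function.iterate_add_apply, hdepth,
      iterate_parent_root]

lemma injOn_iterate_parent (v : Fin T.n) :
    Set.InjOn (fun k => T.parent^[k] v) (Set.Iic (T.depth v)) := by
  suffices ∀ a b, a < b → b ≤ T.depth v → T.parent^[a] v ≠ T.parent^[b] v by
    intro a ha b hb hab
    by_contra hne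
    rcases lt_or_gt_of_ne hne with h | h
    · exact this a b h hb hab
    · exact this b a h ha hab.symm
  intro a b hab hb heq
  have hper : T.parent^[b - a] (T.parent^[a] v) = T.parent^[a] v := by
    rw [← Function.iterate_add_apply, Nat.sub_add_cancel hab.le, ← heq]
  exact Nat.find_min (T.reach v) (hab.trans_le hb)
    (T.eq_root_of_iterate_eq_self (Nat.sub_pos_of_lt hab) hper)

variable (T) in
lemma card_anc (v : Fin T.n) : #{u | T.Anc u v} = T.depth v + 1 := by
  have himage : ({u | T.Anc u v} : Finset (Fin T.n)) =
      (range (T.depth v + 1)).image (fun k => T.parent^[k] v) := by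
    ext u
    simp [anc_iff_exists_le_depth]
  rw [himage, card_image_of_injOn, card_range]
  intro a ha b hb
  exact T.injOn_iterate_parent v (by simpa [Nat.lt_succ_iff] using ha)
    (by simpa [Nat.lt_succ_iff] using hb)

lemma mem_internal {u : Fin T.n} : u ∈ T.internal ↔ ¬ T.IsLeaf u := by
  simp [internal]

lemma mem_children {c v : Fin T.n} : c ∈ T.children v ↔ T.parent c = v ∧ c ≠ T.root := by
  simp [children]

lemma eq_of_anc_of_isLeaf (hroot : ¬ T.IsLeaf T.root) {u v : Fin T.n} (hu : T.IsLeaf u)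
    (h : T.Anc u v) : u = v := by
  obtain ⟨_ | k, hk⟩ := h
  · exact hk.symm
  rw [Function.iterate_succ_apply'] at hk
  by_cases hroot' : T.parent^[k] v = T.root
  · rw [hroot', T.parent_root] at hk
    exact absurd (hk ▸ hu) hroot
  · have : T.parent^[k] v ∈ T.children u := mem_children.mpr ⟨hk, hroot'⟩
    simp [show T.children u = ∅ from hu] at this

lemma mem_internal_of_anc (hroot : ¬ T.IsLeaf T.root) {u w : Fin T.n} (hw : w ∈ T.internal)
    (h : T.Anc u w) : u ∈ T.internal :=
  mem_internal.mpr fun hu => mem_internal.mp (eq_of_anc_of_isLeaf hroot hu h ▸ hw) hu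

lemma card_internal_anc (hroot : ¬ T.IsLeaf T.root) {w : Fin T.n} (hw : w ∈ T.internal) :
    #{u ∈ T.internal | T.Anc u w} = T.depth w + 1 := by
  rw [← T.card_anc w]
  congr 1
  ext u
  simpa using fun h => mem_internal_of_anc hroot hw h

lemma sum_card_internal_desc (hroot : ¬ T.IsLeaf T.root) :
    ∑ u ∈ T.internal, #{w ∈ T.internal | T.Anc u w} = ∑ w ∈ T.internal, (T.depth w + 1) :=
  (sum_card_bipartiteAbove_eq_sum_card_bipartiteBelow T.Anc).trans
    (sum_congr rfl fun _ hw => card_internal_anc hroot hw)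

variable (T) in
lemma sum_card_children : ∑ v, #(T.children v) = T.n - 1 := by
  calc ∑ v, #(T.children v) = #{u | u ≠ T.root} := by
        rw [card_eq_sum_card_fiberwise (f := T.parent) fun _ _ => mem_univ _]
        simp only [children, filter_filter, and_comm]
    _ = T.n - 1 := by rw [filter_ne', card_erase_of_mem (mem_univ _), card_univ, Fintype.card_fin]

variable (T) in
lemma card_leaves_add_card_internal : #T.leaves + #T.internal = T.n := by
  simpa [leaves, internal] using card_filter_add_card_filter_not (s := univ) (T.IsLeaf)

lemma IsORB.card_leaves_eq_card_internal (hT : T.IsORB) : #T.leaves = #T.internal := by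
  have hroot : T.root ∈ T.internal := mem_internal.mpr hT.1
  have hleaves : ∑ v ∈ T.leaves, #(T.children v) = 0 :=
    sum_eq_zero fun v hv => by simp [show T.children v = ∅ from (mem_filter.mp hv).2]
  have hinternal : ∑ v ∈ T.internal, #(T.children v) = 1 + 2 * (#T.internal - 1) := by
    rw [← add_sum_erase _ _ hroot, hT.2.1, sum_congr rfl fun v hv => hT.2.2 v
      (mem_internal.mp (mem_of_mem_erase hv)) (ne_of_mem_erase hv), sum_const, smul_eq_mul,
      card_erase_of_mem hroot, mul_comm]
  have hsplit : ∑ v ∈ T.leaves, #(T.children v) + ∑ v ∈ T.internal, #(T.children v) =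
      T.n - 1 :=
    (sum_filter_add_sum_filter_not univ T.IsLeaf _).trans T.sum_card_children
  have := T.card_leaves_add_card_internal
  have := card_pos.mpr ⟨_, hroot⟩
  omega

lemma ldesc_subset_leaves (v : Fin T.n) : T.Ldesc v ⊆ T.leaves := filter_subset _ _

lemma anc_of_mem_ldesc {v i : Fin T.n} (hi : i ∈ T.Ldesc v) : T.Anc v i := (mem_filter.mp hi).2

lemma not_anc_of_mem_children {v c₀ c₁ : Fin T.n} (h₀ : c₀ ∈ T.children v)
    (h₁ : c₁ ∈ T.children v) (hne : c₀ ≠ c₁) : ¬ T.Anc c₀ c₁ := by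
  rintro ⟨_ | k, hk⟩
  · exact hne hk.symm
  obtain ⟨hp₀, hc₀⟩ := mem_children.mp h₀
  rw [Function.iterate_succ_apply, (mem_children.mp h₁).1] at hk
  have hv : v = T.root :=
    eq_root_of_iterate_eq_self k.succ_pos (by rw [Function.iterate_succ_apply', hk, hp₀])
  exact hc₀ (by rw [← hk, hv, iterate_parent_root])

lemma disjoint_ldesc_of_mem_children {v c₀ c₁ : Fin T.n} (h₀ : c₀ ∈ T.children v)
    (h₁ : c₁ ∈ T.children v) (hne : c₀ ≠ c₁) : Disjoint (T.Ldesc c₀) (T.Ldesc c₁) := by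
  refine disjoint_left.mpr fun i hi₀ hi₁ => ?_
  rcases anc_total (anc_of_mem_ldesc hi₀) (anc_of_mem_ldesc hi₁) with h | h
  · exact not_anc_of_mem_children h₀ h₁ hne h
  · exact not_anc_of_mem_children h₁ h₀ hne.symm h

section Haar

variable {φ : Fin T.n → T.Leaf → ℝ} {v : Fin T.n}

lemma IsHaarLike.anc_of_ne_zero (hφ : T.IsHaarLike φ) (hv : v ∈ T.internal)
    (hvr : v ≠ T.root) {i : T.Leaf} (h : φ v i ≠ 0) : T.Anc v i := by
  obtain ⟨c₀, c₁, -, hch, hval⟩ := hφ.2 v hv hvr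
  rw [hval i] at h
  split_ifs at h with hi₀ hi₁
  · exact anc_trans ⟨1, (mem_children.mp (by simp [hch])).1⟩ (anc_of_mem_ldesc hi₀)
  · exact anc_trans ⟨1, (mem_children.mp (by simp [hch])).1⟩ (anc_of_mem_ldesc hi₁)
  · exact absurd rfl h

lemma IsHaarLike.sum_eq_zero (hφ : T.IsHaarLike φ) (hv : v ∈ T.internal)
    (hvr : v ≠ T.root) : ∑ i, φ v i = 0 := by
  obtain ⟨c₀, c₁, hne, hch, hval⟩ := hφ.2 v hv hvr
  have hdisj := disjoint_ldesc_of_mem_children (v := v) (by simp [hch]) (by simp [hch]) hne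
  set a := √((#(T.Ldesc c₁) : ℝ) / (#(T.Ldesc c₀) * #(T.Ldesc v)))
  set b := √((#(T.Ldesc c₀) : ℝ) / (#(T.Ldesc c₁) * #(T.Ldesc v)))
  calc ∑ i, φ v i
      = ∑ i ∈ T.leaves,
          ((if i ∈ T.Ldesc c₀ then a else 0) + (if i ∈ T.Ldesc c₁ then -b else 0)) := by
        rw [← sum_coe_sort T.leaves]
        refine sum_congr rfl fun i _ => ?_
        rw [hval i]
        by_cases hi₀ : i.1 ∈ T.Ldesc c₀
        · simp [hi₀, disjoint_left.mp hdisj hi₀]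
        · simp [hi₀]
    _ = #(T.Ldesc c₀) * a - #(T.Ldesc c₁) * b := by
        rw [sum_add_distrib, sum_ite_mem, sum_ite_mem,
          inter_eq_right.mpr (ldesc_subset_leaves c₀), inter_eq_right.mpr (ldesc_subset_leaves c₁)]
        simp [sub_eq_add_neg]
    _ = 0 := by rw [mul_sqrt_div_mul_comm _ (Nat.cast_nonneg _) (Nat.cast_nonneg _), sub_self]

lemma IsHaarLike.dotProduct_delta_of_anc (hφ : T.IsHaarLike φ) (hv : v ∈ T.internal)
    (hvr : v ≠ T.root) {w : Fin T.n} (hw : T.Anc w v) :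
    φ v ⬝ᵥ T.delta w = 0 := by
  rw [← hφ.sum_eq_zero hv hvr, dotProduct]
  refine sum_congr rfl fun i _ => ?_
  by_cases h : φ v i = 0
  · simp [h]
  · simp [delta, anc_trans hw (hφ.anc_of_ne_zero hv hvr h)]

lemma IsHaarLike.dotProduct_delta_of_not_anc (hφ : T.IsHaarLike φ) (hv : v ∈ T.internal)
    (hvr : v ≠ T.root) {w : Fin T.n} (h₁ : ¬ T.Anc v w) (h₂ : ¬ T.Anc w v) :
    φ v ⬝ᵥ T.delta w = 0 := by
  refine Finset.sum_eq_zero fun i _ => ?_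
  by_cases h : φ v i = 0
  · simp [h]
  · have : ¬ T.Anc w i := fun hw => (anc_total (hφ.anc_of_ne_zero hv hvr h) hw).elim h₁ h₂
    simp [delta, this]

end Haar

lemma sum_mul_cov_mul (ℓ : Fin T.n → ℝ) (x y : T.Leaf → ℝ) :
    ∑ j, ∑ i, x j * T.cov ℓ j i * y i =
      ∑ w ∈ {w | w ≠ T.root}, ℓ w * ((x ⬝ᵥ T.delta w) * (y ⬝ᵥ T.delta w)) := by
  simp only [cov, Matrix.sum_apply, Matrix.smul_apply, Matrix.vecMulVec_apply, smul_eq_mul,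
    dotProduct, mul_sum, sum_mul]
  conv_lhs => enter [2, j]; rw [sum_comm]
  rw [sum_comm]
  refine sum_congr rfl fun w _ => ?_
  rw [sum_comm]
  exact sum_congr rfl fun i _ => sum_congr rfl fun j _ => by ring

lemma IsHaarLike.sum_mul_cov_mul_eq_zero {φ : Fin T.n → T.Leaf → ℝ} (hφ : T.IsHaarLike φ)
    (ℓ : Fin T.n → ℝ) {u v : Fin T.n} (hu : u ∈ T.internal) (hv : v ∈ T.internal)
    (huv : ¬ T.Anc u v) (hvu : ¬ T.Anc v u) :
    ∑ j, ∑ i, φ u j * T.cov ℓ j i * φ v i = 0 := by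
  have hur : u ≠ T.root := fun h => huv (h ▸ T.anc_root v)
  have hvr : v ≠ T.root := fun h => hvu (h ▸ T.anc_root u)
  rw [sum_mul_cov_mul]
  refine Finset.sum_eq_zero fun w _ => ?_
  by_cases hwu : T.Anc w u
  · simp [hφ.dotProduct_delta_of_anc hu hur hwu]
  by_cases hwv : T.Anc w v
  · simp [hφ.dotProduct_delta_of_anc hv hvr hwv]
  by_cases huw : T.Anc u w
  · have hvw : ¬ T.Anc v w := fun h => (anc_total huw h).elim huv hvu
    simp [hφ.dotProduct_delta_of_not_anc hv hvr hvw hwv]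
  · simp [hφ.dotProduct_delta_of_not_anc hu hur huw hwu]

end RTree

theorem zeta_lower_bound_general (T : RTree) (hT : T.IsORB) (ℓ : Fin T.n → ℝ)
    (φ : Fin T.n → T.Leaf → ℝ) (hφ : T.IsHaarLike φ) :
    -- entries of Φ'SΦ, indexed by pairs of internal nodes
    let M : Fin T.n → Fin T.n → ℝ :=
      fun u v => ∑ j : T.Leaf, ∑ i : T.Leaf, φ u j * T.cov ℓ j i * φ v i
    -- fraction of vanishing entries
    let ζ : ℝ := (((T.internal ×ˢ T.internal).filter fun p => M p.1 p.2 = 0).card : ℝ) /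
      ((T.internal.card : ℝ)) ^ 2
    -- size of the subtree of the interior T̊ rooted at an internal node u
    let isz : Fin T.n → ℕ := fun u => (T.internal.filter fun w => T.Anc u w).card
    -- average subtree size of the interior
    let avgI : ℝ := (∑ u ∈ T.internal, (isz u : ℝ)) / (T.internal.card : ℝ)
    -- total path length of the interior
    let tplI : ℝ := ∑ u ∈ T.internal, (T.depth u : ℝ)
    ζ ≥ 1 + 1 / (T.leaves.card : ℝ) - 2 * avgI / (T.internal.card : ℝ) ∧
      1 + 1 / (T.leaves.card : ℝ) - 2 * avgI / (T.internal.card : ℝ)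
        = 1 - 1 / (T.leaves.card : ℝ) - 2 * tplI / ((T.internal.card : ℝ)) ^ 2 := by
  intro M ζ isz avgI tplI
  have hcount : (#T.internal : ℝ) ^ 2 + #T.internal ≤
      #{p ∈ T.internal ×ˢ T.internal | M p.1 p.2 = 0} + 2 * ∑ u ∈ T.internal, (isz u : ℝ) := by
    exact_mod_cast card_sq_add_card_le T.internal T.Anc (fun u _ => T.anc_refl u)
      (fun p => M p.1 p.2 = 0) fun _ hu _ hv => hφ.sum_mul_cov_mul_eq_zero ℓ hu hv
  have hsize : ∑ u ∈ T.internal, (isz u : ℝ) = tplI + #T.internal := by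
    simp only [isz, tplI, ← Nat.cast_sum, RTree.sum_card_internal_desc hT.1]
    simp [sum_add_distrib]
  have hleaves : (#T.leaves : ℝ) = #T.internal := by
    exact_mod_cast hT.card_leaves_eq_card_internal
  have hpos : (0 : ℝ) < #T.internal := by
    exact_mod_cast card_pos.mpr ⟨T.root, RTree.mem_internal.mpr hT.1⟩
  simp only [ζ, avgI, hleaves]
  constructor
  · rw [ge_iff_le, le_div_iff₀ (by positivity)]
    field_simp
    linarith
  · rw [hsize]
    field_simp
    ring

/-- The fraction `ζ` of vanishing entries in `Φ'SΦ` satisfies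
`ζ ≥ 1 + 1/|L| - 2 avg(T̊)/|T̊| = 1 - 1/|L| - 2 TPL(T̊)/|T̊|²`, where `T̊` is the
interior of `T` (its vertex set is the set of internal nodes of `T`). -/
theorem zeta_lower_bound (T : RTree) (hT : T.IsORB) (ℓ : Fin T.n → ℝ)
    (hℓ : ∀ v, 0 ≤ ℓ v) (hℓpos : ∀ v, T.IsLeaf v → 0 < ℓ v)
    (φ : Fin T.n → T.Leaf → ℝ) (hφ : T.IsHaarLike φ) :
    -- entries of Φ'SΦ, indexed by pairs of internal nodes
    let M : Fin T.n → Fin T.n → ℝ :=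
      fun u v => ∑ j : T.Leaf, ∑ i : T.Leaf, φ u j * T.cov ℓ j i * φ v i
    -- fraction of vanishing entries
    let ζ : ℝ := (((T.internal ×ˢ T.internal).filter fun p => M p.1 p.2 = 0).card : ℝ) /
      ((T.internal.card : ℝ)) ^ 2
    -- size of the subtree of the interior T̊ rooted at an internal node u
    let isz : Fin T.n → ℕ := fun u => (T.internal.filter fun w => T.Anc u w).card
    -- average subtree size of the interior
    let avgI : ℝ := (∑ u ∈ T.internal, (isz u : ℝ)) / (T.internal.card : ℝ)
    -- total path length of the interior
    let tplI : ℝ := ∑ u ∈ T.internal, (T.depth u : ℝ)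
    ζ ≥ 1 + 1 / (T.leaves.card : ℝ) - 2 * avgI / (T.internal.card : ℝ) ∧
      1 + 1 / (T.leaves.card : ℝ) - 2 * avgI / (T.internal.card : ℝ)
        = 1 - 1 / (T.leaves.card : ℝ) - 2 * tplI / ((T.internal.card : ℝ)) ^ 2 :=
  zeta_lower_bound_general T hT ℓ φ hφ
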